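/- arXiv:2009.10717 — 2 statements merged into one kernel-verified Lean document; each statement's English description precedes it below -/
import Mathlib

section
/- For any ADSAGA state, E[φ3⁺ + φ4⁺ + φ5⁺] − (φ3 + φ4 + φ5) ≤ −(m·p_min/(4n))·(φ3 + φ4 + φ5) − (η²·m·p_min/n)·(4·m·L_f·η + 16)·Σ_i ‖α*_i‖² − η²·p_min·(4·m·L_f·η + 4)·Σ_j ‖u_j‖² − (16·m·p_min·η²/n)·Σ_j ( ‖g*_j‖² + ‖β*_j‖² ) + (η²·m·p_min/n)·(c3 + 4·c5)·Σ_i ‖∇f_i(x) − ∇f_i(x*)‖², where the superscript ⁺ denotes the value at the state produced by one step with choice (j, i). -/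
open Finset
open scoped RealInnerProductSpace BigOperators

noncomputable section

/-- The state of the ADSAGA algorithm. -/
structure AdsagaState (d n m : ℕ) where
  x : EuclideanSpace ℝ (Fin d)
  u : Fin m → EuclideanSpace ℝ (Fin d)
  g : Fin m → EuclideanSpace ℝ (Fin d)
  beta : Fin m → EuclideanSpace ℝ (Fin d)
  alpha : Fin n → EuclideanSpace ℝ (Fin d)
  idx : Fin m → Fin n

namespace AdsagaState

variable {d n m : ℕ}

/-- `h_j = g_j - β_j`. -/
def hvec (S : AdsagaState d n m) (j : Fin m) : EuclideanSpace ℝ (Fin d) :=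
  S.g j - S.beta j

/-- `ᾱ = (1/n) ∑ i, α_i`. -/
def abar (S : AdsagaState d n m) : EuclideanSpace ℝ (Fin d) :=
  ((1 : ℝ) / n) • ∑ i, S.alpha i

/-- `v = ∑ j, u_j + m • ᾱ`. -/
def v (S : AdsagaState d n m) : EuclideanSpace ℝ (Fin d) :=
  (∑ j, S.u j) + (m : ℝ) • S.abar

/-- One ADSAGA step with choice `(j, i)` (where `i` is meant to lie in `S_j`). -/
def step (gradf : Fin n → EuclideanSpace ℝ (Fin d) → EuclideanSpace ℝ (Fin d))
    (p : Fin m → ℝ) (pmin η : ℝ) (S : AdsagaState d n m) (j : Fin m) (i : Fin n) :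
    AdsagaState d n m where
  x := S.x - (η * pmin / p j) • (S.u j + S.abar)
  alpha := Function.update S.alpha (S.idx j) (S.g j)
  g := Function.update S.g j (gradf i S.x)
  beta := Function.update S.beta j (if i = S.idx j then S.g j else S.alpha i)
  u := Function.update S.u j
    ((1 - pmin / p j) • S.u j
      + (pmin / p j) • (gradf i S.x - (if i = S.idx j then S.g j else S.alpha i))
      - ((m : ℝ) / n * (1 - pmin / p j)) • S.hvec j)
  idx := Function.update S.idx j i

/-- Run `k` ADSAGA steps, with the `t`-th choice given by the index `ω t` (on machine `J (ω t)`). -/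
def run (gradf : Fin n → EuclideanSpace ℝ (Fin d) → EuclideanSpace ℝ (Fin d))
    (p : Fin m → ℝ) (pmin η : ℝ) (J : Fin n → Fin m) (S0 : AdsagaState d n m) :
    (k : ℕ) → (Fin k → Fin n) → AdsagaState d n m
  | 0, _ => S0
  | (k + 1), ω =>
      step gradf p pmin η (run gradf p pmin η J S0 k (fun t => ω t.castSucc))
        (J (ω (Fin.last k))) (ω (Fin.last k))

end AdsagaState

/-- `φ1 = 4mη (f(x) - f(x^*))` where `f` is the average of the `f_i`. -/
def phi1 (f : Fin n → EuclideanSpace ℝ (Fin d) → ℝ) (xstar : EuclideanSpace ℝ (Fin d))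
    {m : ℕ} (η : ℝ) (S : AdsagaState d n m) : ℝ :=
  4 * (m : ℝ) * η * ((((1 : ℝ) / n) * ∑ i, f i S.x) - (((1 : ℝ) / n) * ∑ i, f i xstar))

/-- `φ2 = ‖y‖² - 2η⟪y, v⟫ + 2η²‖v‖²`. -/
def phi2 (xstar : EuclideanSpace ℝ (Fin d)) {n m : ℕ} (η : ℝ) (S : AdsagaState d n m) : ℝ :=
  ‖S.x - xstar‖ ^ 2 - 2 * η * ⟪S.x - xstar, S.v⟫ + 2 * η ^ 2 * ‖S.v‖ ^ 2

/-- `φ3 = η² c3 ∑ j, (pmin / p j) ‖g*_j‖²`. -/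
def phi3 (gradf : Fin n → EuclideanSpace ℝ (Fin d) → EuclideanSpace ℝ (Fin d))
    (xstar : EuclideanSpace ℝ (Fin d)) {m : ℕ} (p : Fin m → ℝ) (pmin η c3 : ℝ)
    (S : AdsagaState d n m) : ℝ :=
  η ^ 2 * c3 * ∑ j, (pmin / p j) * ‖S.g j - gradf (S.idx j) xstar‖ ^ 2

/-- `φ4 = η² c4 (2 ∑ i, (pmin / p (J i)) ‖α*_i‖² - ∑ j, (pmin / p j) ‖β*_j‖²)`. -/
def phi4 (gradf : Fin n → EuclideanSpace ℝ (Fin d) → EuclideanSpace ℝ (Fin d))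
    (xstar : EuclideanSpace ℝ (Fin d)) {m : ℕ} (J : Fin n → Fin m) (p : Fin m → ℝ)
    (pmin η c4 : ℝ) (S : AdsagaState d n m) : ℝ :=
  η ^ 2 * c4 * ((2 * ∑ i, (pmin / p (J i)) * ‖S.alpha i - gradf i xstar‖ ^ 2)
    - ∑ j, (pmin / p j) * ‖S.beta j - gradf (S.idx j) xstar‖ ^ 2)

/-- `φ5 = η² c5 ∑ j, ‖u_j‖²`. -/
def phi5 {d n m : ℕ} (η c5 : ℝ) (S : AdsagaState d n m) : ℝ :=
  η ^ 2 * c5 * ∑ j, ‖S.u j‖ ^ 2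

/-- The total potential `φ = φ1 + φ2 + φ3 + φ4 + φ5`. -/
def phiTot (f : Fin n → EuclideanSpace ℝ (Fin d) → ℝ)
    (gradf : Fin n → EuclideanSpace ℝ (Fin d) → EuclideanSpace ℝ (Fin d))
    (xstar : EuclideanSpace ℝ (Fin d)) {m : ℕ} (J : Fin n → Fin m) (p : Fin m → ℝ)
    (pmin η c3 c4 c5 : ℝ) (S : AdsagaState d n m) : ℝ :=
  phi1 f xstar η S + phi2 xstar η S + phi3 gradf xstar p pmin η c3 S
    + phi4 gradf xstar J p pmin η c4 S + phi5 η c5 S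

end

/-! Only the coordinates of the chosen machine `j` move, so `φ3` and `φ4` change by explicit
amounts carrying the weight `q = p_min / p_j`, while the new momentum is
`u_j⁺ = (1 - q) (u_j - (m/n) h_j) + q (∇f_i(x) - β_j⁺)`; a convexity bound and Young's inequality
give `p_j ‖u_j⁺‖² ≤ (p_j - p_min (m/n + 3) / 4) ‖u_j‖² + O(p_min (‖h_j‖² + ‖∇f_i(x) - β_j⁺‖²))`.
Weighting by `p_j` cancels every `1 / p_j`, so the expected change is a linear combination of the
unweighted sums of `‖∇f_i(x) - ∇f_i(x*)‖²`, `‖g*_j‖²`, `‖β*_j‖²`, `‖α*_i‖²` and `‖u_j‖²`. The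
invariant `α_{i_j} = β_j` gives `Σ ‖β*_j‖² ≤ Σ ‖α*_i‖²`, and the constants `c3, c4, c5` are chosen
exactly so that the resulting coefficients have the right signs. -/

theorem Fintype.sum_comp_of_card_fiber {ι κ M : Type*} [Fintype ι] [Fintype κ] [DecidableEq κ]
    [AddCommMonoid M] (J : ι → κ) {k : ℕ} (hJ : ∀ j, #{i | J i = j} = k) (F : κ → M) :
    ∑ i, F (J i) = k • ∑ j, F j := by
  simp [← Finset.sum_fiberwise' univ J F, smul_sum, hJ]

theorem Fintype.sum_eq_add_sub_of_eq_of_ne {ι M : Type*} [Fintype ι] [AddCommGroup M]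
    {f g : ι → M} (j : ι) (h : ∀ k ≠ j, g k = f k) :
    ∑ k, g k = ∑ k, f k + (g j - f j) := by
  classical
  have hoff : ∑ k ∈ univ.erase j, g k = ∑ k ∈ univ.erase j, f k :=
    Finset.sum_congr rfl fun k hk => h k (ne_of_mem_erase hk)
  rw [← add_sum_erase _ g (mem_univ j), ← add_sum_erase _ f (mem_univ j), hoff]
  abel

theorem Fintype.sum_ite_eq_section {ι κ E M : Type*} [Fintype ι] [Fintype κ] [DecidableEq ι]
    [AddCommGroup M] {J : ι → κ} {idx : κ → ι} (hidx : ∀ j, J (idx j) = j)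
    (φ : ι → E → M) (g : κ → E) (α : ι → E) :
    ∑ i, φ i (if i = idx (J i) then g (J i) else α i)
      = ∑ i, φ i (α i) + ∑ j, (φ (idx j) (g j) - φ (idx j) (α (idx j))) := by
  have hcorr : ∑ j, (φ (idx j) (g j) - φ (idx j) (α (idx j)))
      = ∑ i, if i = idx (J i) then φ i (g (J i)) - φ i (α i) else 0 :=
    Fintype.sum_of_injective idx (Function.LeftInverse.injective hidx) _ _
      (fun i hi => if_neg fun h => hi ⟨J i, h.symm⟩) (fun j => by simp [hidx])
  rw [hcorr, ← sum_add_distrib]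
  refine Finset.sum_congr rfl fun i _ => ?_
  by_cases h : i = idx (J i)
  · rw [if_pos h, if_pos h]
    abel
  · rw [if_neg h, if_neg h, add_zero]

theorem Fintype.sum_comp_le_sum_of_injective {ι κ M : Type*} [Fintype ι] [Fintype κ]
    [AddCommMonoid M] [PartialOrder M] [IsOrderedAddMonoid M] {idx : κ → ι}
    (hinj : Function.Injective idx) {φ : ι → M} (hφ : ∀ i, 0 ≤ φ i) :
    ∑ j, φ (idx j) ≤ ∑ i, φ i := by
  classical
  rw [← sum_image fun j _ j' _ h => hinj h]
  exact sum_le_sum_of_subset_of_nonneg (subset_univ _) fun i _ _ => hφ i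

theorem Fintype.sum_mul_mul_sub_eq_mul_sum {ι R : Type*} [Fintype ι] [CommRing R] {w : ι → R}
    {a : R} (hw : a * ∑ i, w i = 1) (X : ι → R) (c : R) :
    ∑ i, w i * a * X i - c = a * ∑ i, w i * (X i - c) := by
  calc _ = ∑ i, w i * a * X i - (a * ∑ i, w i) * c := by rw [hw, one_mul]
    _ = _ := by
      rw [mul_sum, mul_sum, sum_mul, ← sum_sub_distrib]
      exact Finset.sum_congr rfl fun i _ => by ring

theorem norm_sub_sq_le_young {E : Type*} [SeminormedAddCommGroup E] (x y : E) {ε : ℝ}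
    (hε : 0 < ε) : ‖x - y‖ ^ 2 ≤ (1 + ε) * ‖x‖ ^ 2 + (1 + ε⁻¹) * ‖y‖ ^ 2 := by
  have hamgm : 2 * ‖x‖ * ‖y‖ ≤ ε * ‖x‖ ^ 2 + ε⁻¹ * ‖y‖ ^ 2 := by
    have hinv : ε * ε⁻¹ = 1 := mul_inv_cancel₀ hε.ne'
    nlinarith [sq_nonneg (ε * ‖x‖ - ‖y‖), inv_pos.2 hε]
  nlinarith [norm_sub_le x y, norm_nonneg (x - y), norm_nonneg x, norm_nonneg y]

theorem norm_sub_sq_le_two_mul_add_two_mul {E : Type*} [SeminormedAddCommGroup E] (x y z : E) :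
    ‖x - y‖ ^ 2 ≤ 2 * ‖x - z‖ ^ 2 + 2 * ‖y - z‖ ^ 2 := by
  have := norm_sub_sq_le_young (x - z) (y - z) one_pos
  rwa [sub_sub_sub_cancel_right, inv_one, one_add_one_eq_two] at this

theorem norm_convex_comb_sq_le {E : Type*} [SeminormedAddCommGroup E] [NormedSpace ℝ E]
    (x y : E) {q : ℝ} (hq0 : 0 ≤ q) (hq1 : q ≤ 1) :
    ‖(1 - q) • x + q • y‖ ^ 2 ≤ (1 - q) * (1 - q / 2) * ‖x‖ ^ 2 + 2 * q * ‖y‖ ^ 2 := by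
  have htri : ‖(1 - q) • x + q • y‖ ≤ (1 - q) * ‖x‖ + q * ‖y‖ := by
    refine (norm_add_le _ _).trans_eq ?_
    rw [norm_smul, norm_smul, Real.norm_of_nonneg (sub_nonneg.2 hq1), Real.norm_of_nonneg hq0]
  have hamgm : 0 ≤ q * (1 - q) * (‖x‖ - 2 * ‖y‖) ^ 2 := by
    have : 0 ≤ 1 - q := sub_nonneg.2 hq1
    positivity
  nlinarith [mul_self_le_mul_self (norm_nonneg _) htri, sq_nonneg (q * ‖y‖)]

theorem contraction_factor_le {q a : ℝ} (hq0 : 0 ≤ q) (hq1 : q ≤ 1) (ha0 : 0 ≤ a) (ha1 : a ≤ 1) :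
    (1 - q) * (1 - q / 2) * (1 + a * q / 2) ≤ 1 - q * (a + 3) / 4 := by
  have h1q : 0 ≤ 1 - q := sub_nonneg.2 hq1
  have h1a : 0 ≤ 1 - a := sub_nonneg.2 ha1
  nlinarith [mul_nonneg (mul_nonneg hq0 h1q) h1a, mul_nonneg (sq_nonneg q) h1a,
    mul_nonneg (mul_nonneg ha0 (sq_nonneg q)) h1q]

theorem norm_momentum_update_sq_le {E : Type*} [SeminormedAddCommGroup E] [NormedSpace ℝ E]
    (u y h : E) {q a : ℝ} (hq0 : 0 < q) (hq1 : q ≤ 1) (ha0 : 0 < a) (ha1 : a ≤ 1) :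
    ‖(1 - q) • u + q • y - (a * (1 - q)) • h‖ ^ 2
      ≤ (1 - q * (a + 3) / 4) * ‖u‖ ^ 2 + (2 * a / q + a ^ 2) * ‖h‖ ^ 2 + 2 * q * ‖y‖ ^ 2 := by
  have hvec : (1 - q) • u + q • y - (a * (1 - q)) • h = (1 - q) • (u - a • h) + q • y := by
    module
  have hyoung := norm_sub_sq_le_young u (a • h) (by positivity : 0 < a * q / 2)
  have hh : (1 + (a * q / 2)⁻¹) * ‖a • h‖ ^ 2 = (2 * a / q + a ^ 2) * ‖h‖ ^ 2 := by
    rw [norm_smul, Real.norm_of_nonneg ha0.le]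
    field_simp
    ring
  have hw0 : 0 ≤ (1 - q) * (1 - q / 2) := by
    have : 0 ≤ 1 - q := sub_nonneg.2 hq1
    have : 0 ≤ 1 - q / 2 := by linarith
    positivity
  have hw1 : (1 - q) * (1 - q / 2) ≤ 1 := by nlinarith
  have hc : 0 ≤ (2 * a / q + a ^ 2) * ‖h‖ ^ 2 := by positivity
  rw [hvec]
  refine (norm_convex_comb_sq_le _ y hq0.le hq1).trans ?_
  nlinarith [mul_le_mul_of_nonneg_left (hyoung.trans_eq (by rw [hh])) hw0,
    mul_le_mul_of_nonneg_right (contraction_factor_le hq0.le hq1 ha0.le ha1) (sq_nonneg ‖u‖),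
    mul_le_mul_of_nonneg_right hw1 hc]

theorem mul_hvec_coeff_le {pmin pj pmax a : ℝ} (hpmin : 0 < pmin) (h1 : pmin ≤ pj)
    (h2 : pj ≤ pmax) (ha0 : 0 ≤ a) (ha1 : a ≤ 1) :
    pj * (2 * a / (pmin / pj) + a ^ 2) ≤ 3 * a * (pmax / pmin) ^ 2 * pmin := by
  have hpj : 0 < pj := hpmin.trans_le h1
  have hpmax : pmax ≤ pmax ^ 2 / pmin := by
    rw [le_div_iff₀ hpmin]
    nlinarith
  have hsq : pj ^ 2 / pmin ≤ pmax ^ 2 / pmin := by gcongr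
  have heq : pj * (2 * a / (pmin / pj) + a ^ 2) = 2 * a * (pj ^ 2 / pmin) + a * (a * pj) := by
    field_simp
  have hrhs : 3 * a * (pmax / pmin) ^ 2 * pmin = 3 * a * (pmax ^ 2 / pmin) := by
    field_simp
  rw [heq, hrhs]
  nlinarith [mul_le_mul_of_nonneg_left hsq ha0, mul_le_mul ha1 h2 hpj.le zero_le_one]

theorem add_mul_nonneg_of_le {R : Type*} [CommRing R] [PartialOrder R] [IsOrderedRing R]
    {x y A B : R} (hx : 0 ≤ x) (hxy : 0 ≤ x + y) (hB : 0 ≤ B) (hBA : B ≤ A) :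
    0 ≤ x * A + y * B := by
  have hsplit : x * A + y * B = x * (A - B) + (x + y) * B := by ring
  rw [hsplit]
  exact add_nonneg (mul_nonneg hx (sub_nonneg.2 hBA)) (mul_nonneg hxy hB)

theorem phi345_coeff_ineq {a R K s c3 c4 N G B A U : ℝ} (ha0 : 0 ≤ a) (ha1 : a ≤ 1)
    (hR : 1 ≤ R) (hK : 0 ≤ K) (hs : s = 16 / 3 * (K + 1)) (hc4 : c4 = (22 + 76 * a * R) * s)
    (hc3 : c3 = (64 + 168 * a * R) * s) (hG : 0 ≤ G) (hB : 0 ≤ B) (hBA : B ≤ A) :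
    c3 * (a * N - G) + c4 * (2 * G - B - a * (A - B + G))
      + s * (-((a + 3) / 4) * U + 6 * a * R * (G + B) + 4 * a * (N + A - B + G))
    ≤ -(a / 4) * (c3 * G + 2 * c4 * A + s * U) - a * (4 * K + 16) * A - (4 * K + 4) * U
      - 16 * a * (G + B) + a * (c3 + 4 * s) * N := by
  subst hc3 hc4 hs
  have haR : 0 ≤ a * R := mul_nonneg ha0 (zero_le_one.trans hR)
  have hG_coeff :
      0 ≤ 16 / 3 * (K + 1) * (20 + 2 * a + 10 * (a * R) + 34 * a * (a * R)) - 16 * a := by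
    nlinarith [mul_nonneg hK haR, mul_nonneg (mul_nonneg hK ha0) haR, mul_nonneg ha0 haR]
  have hA_coeff : 0 ≤ a * (16 / 3 * (K + 1) * (7 + 38 * (a * R)) - 4 * K - 16) := by
    refine mul_nonneg ha0 ?_
    nlinarith [mul_nonneg hK haR]
  have hAB_coeff : 0 ≤ a * (16 / 3 * (K + 1) * (7 + 38 * (a * R)) - 4 * K - 16)
      + (16 / 3 * (K + 1) * ((1 - a) * (22 + 76 * (a * R)) - 6 * (a * R) + 4 * a) - 16 * a) := by
    nlinarith [mul_nonneg hK haR, mul_nonneg (mul_nonneg hK haR) (sub_nonneg.2 ha1),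
      mul_nonneg haR (sub_nonneg.2 ha1), mul_nonneg hK ha0, mul_nonneg hK (sub_nonneg.2 ha1)]
  -- The coefficients of `N` and `U` vanish; that of `B` may be negative and is absorbed by that
  -- of `A`, since `B ≤ A`.
  linear_combination mul_nonneg hG_coeff hG + add_mul_nonneg_of_le hA_coeff hAB_coeff hB hBA

namespace AdsagaState

variable {d n m : ℕ} (gradf : Fin n → EuclideanSpace ℝ (Fin d) → EuclideanSpace ℝ (Fin d))
  (xstar : EuclideanSpace ℝ (Fin d)) (p : Fin m → ℝ) (pmin η : ℝ) (S : AdsagaState d n m)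
  (j : Fin m) (i : Fin n)

theorem phi3_step (c3 : ℝ) :
    phi3 gradf xstar p pmin η c3 (S.step gradf p pmin η j i)
      = phi3 gradf xstar p pmin η c3 S + η ^ 2 * c3 * (pmin / p j)
        * (‖gradf i S.x - gradf i xstar‖ ^ 2 - ‖S.g j - gradf (S.idx j) xstar‖ ^ 2) := by
  unfold phi3
  rw [Fintype.sum_eq_add_sub_of_eq_of_ne
    (f := fun k => pmin / p k * ‖S.g k - gradf (S.idx k) xstar‖ ^ 2) j
    fun k hk => by simp [step, hk]]
  simp [step]
  ring

theorem phi4_step {J : Fin n → Fin m} (c4 : ℝ) (hidx : J (S.idx j) = j)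
    (hinv : S.alpha (S.idx j) = S.beta j) :
    phi4 gradf xstar J p pmin η c4 (S.step gradf p pmin η j i)
      = phi4 gradf xstar J p pmin η c4 S + η ^ 2 * c4 * (pmin / p j)
        * (2 * ‖S.g j - gradf (S.idx j) xstar‖ ^ 2 - ‖S.beta j - gradf (S.idx j) xstar‖ ^ 2
          - ‖(if i = S.idx j then S.g j else S.alpha i) - gradf i xstar‖ ^ 2) := by
  unfold phi4
  rw [Fintype.sum_eq_add_sub_of_eq_of_ne
      (f := fun k => pmin / p (J k) * ‖S.alpha k - gradf k xstar‖ ^ 2) (S.idx j)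
      fun k hk => by simp [step, hk],
    Fintype.sum_eq_add_sub_of_eq_of_ne
      (f := fun k => pmin / p k * ‖S.beta k - gradf (S.idx k) xstar‖ ^ 2) j
      fun k hk => by simp [step, hk]]
  simp [step, hidx, hinv]
  ring

theorem phi5_step (c5 : ℝ) :
    phi5 η c5 (S.step gradf p pmin η j i)
      = phi5 η c5 S + η ^ 2 * c5 * (‖(S.step gradf p pmin η j i).u j‖ ^ 2 - ‖S.u j‖ ^ 2) := by
  unfold phi5
  rw [Fintype.sum_eq_add_sub_of_eq_of_ne (f := fun k => ‖S.u k‖ ^ 2) j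
    fun k hk => by simp [step, hk]]
  ring

theorem mul_phi345_step_sub_le {J : Fin n → Fin m} (c3 c4 c5 pmax : ℝ)
    (hidx : J (S.idx j) = j) (hinv : S.alpha (S.idx j) = S.beta j) (hpmin : 0 < pmin)
    (hple : pmin ≤ p j) (hpge : p j ≤ pmax) (ha0 : 0 < (m : ℝ) / n) (ha1 : (m : ℝ) / n ≤ 1)
    (hc5 : 0 ≤ c5) :
    p j * ((phi3 gradf xstar p pmin η c3 (S.step gradf p pmin η j i)
          + phi4 gradf xstar J p pmin η c4 (S.step gradf p pmin η j i)
          + phi5 η c5 (S.step gradf p pmin η j i))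
        - (phi3 gradf xstar p pmin η c3 S + phi4 gradf xstar J p pmin η c4 S + phi5 η c5 S))
      ≤ η ^ 2 * pmin * (c3 * (‖gradf i S.x - gradf i xstar‖ ^ 2
            - ‖S.g j - gradf (S.idx j) xstar‖ ^ 2)
        + c4 * (2 * ‖S.g j - gradf (S.idx j) xstar‖ ^ 2 - ‖S.beta j - gradf (S.idx j) xstar‖ ^ 2
            - ‖(if i = S.idx j then S.g j else S.alpha i) - gradf i xstar‖ ^ 2)
        + c5 * (-(((m : ℝ) / n + 3) / 4) * ‖S.u j‖ ^ 2
          + 6 * ((m : ℝ) / n) * (pmax / pmin) ^ 2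
            * (‖S.g j - gradf (S.idx j) xstar‖ ^ 2 + ‖S.beta j - gradf (S.idx j) xstar‖ ^ 2)
          + 4 * (‖gradf i S.x - gradf i xstar‖ ^ 2
            + ‖(if i = S.idx j then S.g j else S.alpha i) - gradf i xstar‖ ^ 2))) := by
  set a : ℝ := (m : ℝ) / n
  set b := if i = S.idx j then S.g j else S.alpha i
  have hpj : 0 < p j := hpmin.trans_le hple
  have hqp : p j * (pmin / p j) = pmin := mul_div_cancel₀ _ hpj.ne'
  have hu : (S.step gradf p pmin η j i).u j = (1 - pmin / p j) • S.u j
      + (pmin / p j) • (gradf i S.x - b) - (a * (1 - pmin / p j)) • S.hvec j := by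
    simp [step, b, a]
  have hh : ‖S.hvec j‖ ^ 2
      ≤ 2 * ‖S.g j - gradf (S.idx j) xstar‖ ^ 2 + 2 * ‖S.beta j - gradf (S.idx j) xstar‖ ^ 2 :=
    norm_sub_sq_le_two_mul_add_two_mul _ _ _
  have hy : ‖gradf i S.x - b‖ ^ 2
      ≤ 2 * ‖gradf i S.x - gradf i xstar‖ ^ 2 + 2 * ‖b - gradf i xstar‖ ^ 2 :=
    norm_sub_sq_le_two_mul_add_two_mul _ _ _
  have hu_le := norm_momentum_update_sq_le (S.u j) (gradf i S.x - b) (S.hvec j)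
    (div_pos hpmin hpj) ((div_le_one hpj).2 hple) ha0 ha1
  have hw := mul_hvec_coeff_le hpmin hple hpge ha0.le ha1
  have hU : p j * ‖(S.step gradf p pmin η j i).u j‖ ^ 2
      ≤ (p j - pmin * (a + 3) / 4) * ‖S.u j‖ ^ 2
        + 3 * a * (pmax / pmin) ^ 2 * pmin
          * (2 * ‖S.g j - gradf (S.idx j) xstar‖ ^ 2 + 2 * ‖S.beta j - gradf (S.idx j) xstar‖ ^ 2)
        + 2 * pmin * (2 * ‖gradf i S.x - gradf i xstar‖ ^ 2 + 2 * ‖b - gradf i xstar‖ ^ 2) := by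
    rw [hu]
    linear_combination mul_le_mul_of_nonneg_left hu_le hpj.le
      + mul_le_mul_of_nonneg_right hw (sq_nonneg ‖S.hvec j‖)
      + mul_le_mul_of_nonneg_left hh (by positivity : 0 ≤ 3 * a * (pmax / pmin) ^ 2 * pmin)
      + mul_le_mul_of_nonneg_left hy (by positivity : 0 ≤ 2 * pmin)
      + (2 * ‖gradf i S.x - b‖ ^ 2 - (a + 3) / 4 * ‖S.u j‖ ^ 2) * hqp
  rw [phi3_step, phi4_step (hidx := hidx) (hinv := hinv), phi5_step]
  linear_combination (η ^ 2 * c5) * hU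
    + η ^ 2 * (c3 * (‖gradf i S.x - gradf i xstar‖ ^ 2 - ‖S.g j - gradf (S.idx j) xstar‖ ^ 2)
      + c4 * (2 * ‖S.g j - gradf (S.idx j) xstar‖ ^ 2 - ‖S.beta j - gradf (S.idx j) xstar‖ ^ 2
        - ‖b - gradf i xstar‖ ^ 2)) * hqp

theorem phi345_le {J : Fin n → Fin m} (c3 c4 c5 : ℝ) (hpmin : 0 ≤ pmin) (hple : ∀ j, pmin ≤ p j)
    (hc3 : 0 ≤ c3) (hc4 : 0 ≤ c4) :
    phi3 gradf xstar p pmin η c3 S + phi4 gradf xstar J p pmin η c4 S + phi5 η c5 S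
      ≤ η ^ 2 * (c3 * ∑ j, ‖S.g j - gradf (S.idx j) xstar‖ ^ 2
        + 2 * c4 * ∑ i, ‖S.alpha i - gradf i xstar‖ ^ 2 + c5 * ∑ j, ‖S.u j‖ ^ 2) := by
  have hq : ∀ j, 0 ≤ pmin / p j ∧ pmin / p j ≤ 1 := fun j =>
    ⟨div_nonneg hpmin (hpmin.trans (hple j)), div_le_one_of_le₀ (hple j) (hpmin.trans (hple j))⟩
  have hG : ∑ j, pmin / p j * ‖S.g j - gradf (S.idx j) xstar‖ ^ 2
      ≤ ∑ j, ‖S.g j - gradf (S.idx j) xstar‖ ^ 2 :=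
    sum_le_sum fun j _ => mul_le_of_le_one_left (sq_nonneg _) (hq j).2
  have hA : ∑ i, pmin / p (J i) * ‖S.alpha i - gradf i xstar‖ ^ 2
      ≤ ∑ i, ‖S.alpha i - gradf i xstar‖ ^ 2 :=
    sum_le_sum fun i _ => mul_le_of_le_one_left (sq_nonneg _) (hq (J i)).2
  have hB : 0 ≤ ∑ j, pmin / p j * ‖S.beta j - gradf (S.idx j) xstar‖ ^ 2 :=
    sum_nonneg fun j _ => mul_nonneg (hq j).1 (sq_nonneg _)
  unfold phi3 phi4 phi5
  linear_combination (η ^ 2 * c3) * hG + (2 * η ^ 2 * c4) * hA + (η ^ 2 * c4) * hB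

theorem expected_phi345_change_le {J : Fin n → Fin m} (c3 c4 c5 pmax : ℝ) (hn : 0 < n)
    (hm : 0 < m) (hmn : m ∣ n) (hpart : ∀ j, #{i | J i = j} = n / m) (hpsum : ∑ j, p j = 1)
    (hidx : ∀ j, J (S.idx j) = j) (hinv : ∀ j, S.alpha (S.idx j) = S.beta j) (hpmin : 0 < pmin)
    (hple : ∀ j, pmin ≤ p j) (hpge : ∀ j, p j ≤ pmax) (hc5 : 0 ≤ c5) :
    (∑ i, p (J i) * ((m : ℝ) / n) *
        (phi3 gradf xstar p pmin η c3 (S.step gradf p pmin η (J i) i)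
          + phi4 gradf xstar J p pmin η c4 (S.step gradf p pmin η (J i) i)
          + phi5 η c5 (S.step gradf p pmin η (J i) i)))
        - (phi3 gradf xstar p pmin η c3 S + phi4 gradf xstar J p pmin η c4 S + phi5 η c5 S)
      ≤ η ^ 2 * pmin *
        (c3 * ((m : ℝ) / n * ∑ i, ‖gradf i S.x - gradf i xstar‖ ^ 2
            - ∑ j, ‖S.g j - gradf (S.idx j) xstar‖ ^ 2)
          + c4 * (2 * ∑ j, ‖S.g j - gradf (S.idx j) xstar‖ ^ 2
            - ∑ j, ‖S.beta j - gradf (S.idx j) xstar‖ ^ 2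
            - (m : ℝ) / n * (∑ i, ‖S.alpha i - gradf i xstar‖ ^ 2
              - ∑ j, ‖S.beta j - gradf (S.idx j) xstar‖ ^ 2
              + ∑ j, ‖S.g j - gradf (S.idx j) xstar‖ ^ 2))
          + c5 * (-(((m : ℝ) / n + 3) / 4) * ∑ j, ‖S.u j‖ ^ 2
            + 6 * ((m : ℝ) / n) * (pmax / pmin) ^ 2 * (∑ j, ‖S.g j - gradf (S.idx j) xstar‖ ^ 2
              + ∑ j, ‖S.beta j - gradf (S.idx j) xstar‖ ^ 2)
            + 4 * ((m : ℝ) / n) * (∑ i, ‖gradf i S.x - gradf i xstar‖ ^ 2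
              + ∑ i, ‖S.alpha i - gradf i xstar‖ ^ 2
              - ∑ j, ‖S.beta j - gradf (S.idx j) xstar‖ ^ 2
              + ∑ j, ‖S.g j - gradf (S.idx j) xstar‖ ^ 2))) := by
  have hnR : (0 : ℝ) < n := Nat.cast_pos.2 hn
  have hmR : (0 : ℝ) < m := Nat.cast_pos.2 hm
  have ha0 : 0 < (m : ℝ) / n := div_pos hmR hnR
  have ha1 : (m : ℝ) / n ≤ 1 :=
    div_le_one_of_le₀ (Nat.cast_le.2 (Nat.le_of_dvd hn hmn)) hnR.le
  have hfib : ∀ F : Fin m → ℝ, ∑ i, F (J i) = (n : ℝ) / m * ∑ j, F j := fun F => by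
    rw [Fintype.sum_comp_of_card_fiber J hpart, nsmul_eq_mul,
      Nat.cast_div hmn (Nat.cast_ne_zero.2 hm.ne')]
  have hw : (m : ℝ) / n * ∑ i, p (J i) = 1 := by
    rw [hfib p, hpsum]
    field_simp
  have hP : ∑ i, ‖(if i = S.idx (J i) then S.g (J i) else S.alpha i) - gradf i xstar‖ ^ 2
      = ∑ i, ‖S.alpha i - gradf i xstar‖ ^ 2 - ∑ j, ‖S.beta j - gradf (S.idx j) xstar‖ ^ 2
        + ∑ j, ‖S.g j - gradf (S.idx j) xstar‖ ^ 2 := by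
    rw [Fintype.sum_ite_eq_section hidx (fun i v => ‖v - gradf i xstar‖ ^ 2), sum_sub_distrib]
    simp only [hinv]
    ring
  rw [Fintype.sum_mul_mul_sub_eq_mul_sum hw]
  refine (mul_le_mul_of_nonneg_left (sum_le_sum fun i _ =>
    S.mul_phi345_step_sub_le gradf xstar p pmin η (J i) i c3 c4 c5 pmax (hidx _) (hinv _) hpmin
      (hple _) (hpge _) ha0 ha1 hc5) ha0.le).trans_eq ?_
  have hG := hfib fun j => ‖S.g j - gradf (S.idx j) xstar‖ ^ 2
  have hB := hfib fun j => ‖S.beta j - gradf (S.idx j) xstar‖ ^ 2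
  have hU := hfib fun j => ‖S.u j‖ ^ 2
  simp only [mul_add, mul_sub, sum_add_distrib, sum_sub_distrib, ← mul_sum, hG, hB, hU, hP]
  field_simp
  ring

end AdsagaState

theorem adsaga_phi345_decrease_general
    {d n m : ℕ} (hn : 0 < n) (hm : 0 < m) (hmn : m ∣ n)
    (Lf : ℝ) (hLf : 0 < Lf)
    (gradf : Fin n → EuclideanSpace ℝ (Fin d) → EuclideanSpace ℝ (Fin d))
    (xstar : EuclideanSpace ℝ (Fin d))
    (J : Fin n → Fin m)
    (hpart : ∀ j, (Finset.univ.filter (fun i => J i = j)).card = n / m)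
    (p : Fin m → ℝ) (hp : ∀ j, 0 < p j) (hpsum : (∑ j, p j) = 1)
    (pmin pmax : ℝ)
    (hpmin : IsLeast (Set.range p) pmin) (hpmax : IsGreatest (Set.range p) pmax)
    (η : ℝ) (hη : 0 < η)
    (S : AdsagaState d n m)
    (hidx : ∀ j, J (S.idx j) = j)
    (hinv : ∀ j, S.alpha (S.idx j) = S.beta j)
    (c3 c4 c5 : ℝ)
    (hc5 : c5 = (16 / 3) * ((m : ℝ) * Lf * η + 1))
    (hc4 : c4 = (22 + 76 * ((m : ℝ) / n) * (pmax / pmin) ^ 2) * c5)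
    (hc3 : c3 = (64 + 168 * ((m : ℝ) / n) * (pmax / pmin) ^ 2) * c5)
    :
    (∑ i : Fin n, p (J i) * ((m : ℝ) / n) *
        (phi3 gradf xstar p pmin η c3 (AdsagaState.step gradf p pmin η S (J i) i)
          + phi4 gradf xstar J p pmin η c4 (AdsagaState.step gradf p pmin η S (J i) i)
          + phi5 η c5 (AdsagaState.step gradf p pmin η S (J i) i)))
        - (phi3 gradf xstar p pmin η c3 S + phi4 gradf xstar J p pmin η c4 S + phi5 η c5 S)
      ≤ -((m : ℝ) * pmin / (4 * n)) *
            (phi3 gradf xstar p pmin η c3 S + phi4 gradf xstar J p pmin η c4 S + phi5 η c5 S)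
        - (η ^ 2 * (m : ℝ) * pmin / n) * (4 * (m : ℝ) * Lf * η + 16) *
            (∑ i, ‖S.alpha i - gradf i xstar‖ ^ 2)
        - η ^ 2 * pmin * (4 * (m : ℝ) * Lf * η + 4) * (∑ j, ‖S.u j‖ ^ 2)
        - (16 * (m : ℝ) * pmin * η ^ 2 / n) *
            (∑ j, (‖S.g j - gradf (S.idx j) xstar‖ ^ 2
              + ‖S.beta j - gradf (S.idx j) xstar‖ ^ 2))
        + (η ^ 2 * (m : ℝ) * pmin / n) * (c3 + 4 * c5) *
            (∑ i, ‖gradf i S.x - gradf i xstar‖ ^ 2) := by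
  obtain ⟨j0, hj0⟩ := hpmin.1
  have hpmin0 : 0 < pmin := hj0 ▸ hp j0
  have hple : ∀ j, pmin ≤ p j := fun j => hpmin.2 ⟨j, rfl⟩
  have hpge : ∀ j, p j ≤ pmax := fun j => hpmax.2 ⟨j, rfl⟩
  have ha1 : (m : ℝ) / n ≤ 1 :=
    div_le_one_of_le₀ (Nat.cast_le.2 (Nat.le_of_dvd hn hmn)) (Nat.cast_nonneg n)
  have hR : 1 ≤ (pmax / pmin) ^ 2 := one_le_pow₀ ((one_le_div hpmin0).2 (hpmin.2 hpmax.1))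
  have hc5pos : 0 ≤ c5 := by rw [hc5]; positivity
  have hc4pos : 0 ≤ c4 := by rw [hc4]; positivity
  have hc3pos : 0 ≤ c3 := by rw [hc3]; positivity
  have hBA : ∑ j, ‖S.beta j - gradf (S.idx j) xstar‖ ^ 2
      ≤ ∑ i, ‖S.alpha i - gradf i xstar‖ ^ 2 := by
    simp only [← hinv]
    exact Fintype.sum_comp_le_sum_of_injective (Function.LeftInverse.injective hidx)
      (φ := fun i => ‖S.alpha i - gradf i xstar‖ ^ 2) fun i => sq_nonneg _
  rw [sum_add_distrib]
  refine (S.expected_phi345_change_le gradf xstar p pmin η c3 c4 c5 pmax hn hm hmn hpart hpsum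
    hidx hinv hpmin0 hple hpge hc5pos).trans ?_
  linear_combination (η ^ 2 * pmin) * phi345_coeff_ineq
      (N := ∑ i, ‖gradf i S.x - gradf i xstar‖ ^ 2) (U := ∑ j, ‖S.u j‖ ^ 2)
      (G := ∑ j, ‖S.g j - gradf (S.idx j) xstar‖ ^ 2) (by positivity) ha1 hR (by positivity)
      hc5 hc4 hc3 (by positivity) (by positivity) hBA
    + ((m : ℝ) * pmin / (4 * n)) * S.phi345_le gradf xstar p pmin η c3 c4 c5 hpmin0.le hple
      hc3pos hc4pos

theorem adsaga_phi345_decrease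
    {d n m : ℕ} (hd : 0 < d) (hn : 0 < n) (hm : 0 < m) (hmn : m ∣ n)
    (L Lf μ : ℝ) (hL : 0 < L) (hLf : 0 < Lf) (hμ : 0 < μ)
    (f : Fin n → EuclideanSpace ℝ (Fin d) → ℝ)
    (gradf : Fin n → EuclideanSpace ℝ (Fin d) → EuclideanSpace ℝ (Fin d))
    (hgrad : ∀ i x, HasGradientAt (f i) (gradf i x) x)
    (hconv : ∀ i, ConvexOn ℝ Set.univ (f i))
    (hsmooth : ∀ i (x y : EuclideanSpace ℝ (Fin d)), ‖gradf i x - gradf i y‖ ≤ L * ‖x - y‖)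
    (hFsmooth : ∀ x y : EuclideanSpace ℝ (Fin d),
      ‖((1 : ℝ) / n) • (∑ i, gradf i x) - ((1 : ℝ) / n) • (∑ i, gradf i y)‖ ≤ Lf * ‖x - y‖)
    (hFstrong : ∀ x y : EuclideanSpace ℝ (Fin d),
      μ * ‖x - y‖ ^ 2 ≤
        ⟪((1 : ℝ) / n) • (∑ i, gradf i x) - ((1 : ℝ) / n) • (∑ i, gradf i y), x - y⟫)
    (xstar : EuclideanSpace ℝ (Fin d))
    (hmin : ∀ x : EuclideanSpace ℝ (Fin d),
      (((1 : ℝ) / n) * ∑ i, f i xstar) ≤ ((1 : ℝ) / n) * ∑ i, f i x)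
    (hstarzero : (∑ i, gradf i xstar) = 0)
    (J : Fin n → Fin m)
    (hpart : ∀ j, (Finset.univ.filter (fun i => J i = j)).card = n / m)
    (p : Fin m → ℝ) (hp : ∀ j, 0 < p j) (hpsum : (∑ j, p j) = 1)
    (pmin pmax : ℝ)
    (hpmin : IsLeast (Set.range p) pmin) (hpmax : IsGreatest (Set.range p) pmax)
    (η : ℝ) (hη : 0 < η)
    (S : AdsagaState d n m)
    (hidx : ∀ j, J (S.idx j) = j)
    (hinv : ∀ j, S.alpha (S.idx j) = S.beta j)
    (c3 c4 c5 : ℝ)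
    (hc5 : c5 = (16 / 3) * ((m : ℝ) * Lf * η + 1))
    (hc4 : c4 = (22 + 76 * ((m : ℝ) / n) * (pmax / pmin) ^ 2) * c5)
    (hc3 : c3 = (64 + 168 * ((m : ℝ) / n) * (pmax / pmin) ^ 2) * c5)
    :
    (∑ i : Fin n, p (J i) * ((m : ℝ) / n) *
        (phi3 gradf xstar p pmin η c3 (AdsagaState.step gradf p pmin η S (J i) i)
          + phi4 gradf xstar J p pmin η c4 (AdsagaState.step gradf p pmin η S (J i) i)
          + phi5 η c5 (AdsagaState.step gradf p pmin η S (J i) i)))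
        - (phi3 gradf xstar p pmin η c3 S + phi4 gradf xstar J p pmin η c4 S + phi5 η c5 S)
      ≤ -((m : ℝ) * pmin / (4 * n)) *
            (phi3 gradf xstar p pmin η c3 S + phi4 gradf xstar J p pmin η c4 S + phi5 η c5 S)
        - (η ^ 2 * (m : ℝ) * pmin / n) * (4 * (m : ℝ) * Lf * η + 16) *
            (∑ i, ‖S.alpha i - gradf i xstar‖ ^ 2)
        - η ^ 2 * pmin * (4 * (m : ℝ) * Lf * η + 4) * (∑ j, ‖S.u j‖ ^ 2)
        - (16 * (m : ℝ) * pmin * η ^ 2 / n) *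
            (∑ j, (‖S.g j - gradf (S.idx j) xstar‖ ^ 2
              + ‖S.beta j - gradf (S.idx j) xstar‖ ^ 2))
        + (η ^ 2 * (m : ℝ) * pmin / n) * (c3 + 4 * c5) *
            (∑ i, ‖gradf i S.x - gradf i xstar‖ ^ 2) :=
  adsaga_phi345_decrease_general hn hm hmn Lf hLf gradf xstar J hpart p hp hpsum pmin pmax hpmin
    hpmax η hη S hidx hinv c3 c4 c5 hc5 hc4 hc3
end

section
/- For any minibatch-SAGA state, E_B[φ1⁺] − φ1 ≤ −2·m·η·⟨y, ∇f(x)⟩ + η²·m²·‖∇f(x)‖² + 2·η²·m·L·⟨y, ∇f(x)⟩ + (2·η²·m/n)·Σ_{i=1}^n ‖α_i − ∇f_i(x*)‖², where φ1⁺ denotes the value of φ1 at the state produced by one step with batch B. -/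
/-!
Write `u i = ∇fᵢ(x) - αᵢ` and let `μ j` be the mean of `u` over `S_j`. Since
`Σ_j μ j + m ᾱ = m ∇f(x)`, the step is `x⁺ - x* = (y - η m ∇f(x)) + Σ_j η (μ j - u i_j)`, and the
batch terms are independent and centred. Hence the expected square is `‖y - η m ∇f(x)‖²` plus `η²`
times the sum of their variances, each at most the corresponding second moment; these add up to
`(m/n) Σᵢ ‖u i‖²`. Finally `‖u i‖² ≤ 2‖∇fᵢ(x) - ∇fᵢ(x*)‖² + 2‖αᵢ - ∇fᵢ(x*)‖²`, and co-coercivity of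
the gradient of a convex `L`-smooth function, `‖∇fᵢ(x) - ∇fᵢ(x*)‖² ≤ L ⟪∇fᵢ(x) - ∇fᵢ(x*), x - x*⟫`,
summed over `i` using `Σᵢ ∇fᵢ(x*) = 0`, bounds `Σᵢ ‖∇fᵢ(x) - ∇fᵢ(x*)‖²` by `L n ⟪y, ∇f(x)⟫`.
-/

open Finset
open scoped RealInnerProductSpace BigOperators

noncomputable section

/-- The state of minibatch SAGA: the iterate `x` and the last gradients `α_i`. -/
structure MbState (d n : ℕ) where
  x : EuclideanSpace ℝ (Fin d)
  alpha : Fin n → EuclideanSpace ℝ (Fin d)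

namespace MbState

variable {d n : ℕ}

/-- `ᾱ = (1/n) ∑ i, α_i`. -/
def abar (S : MbState d n) : EuclideanSpace ℝ (Fin d) :=
  ((1 : ℝ) / n) • ∑ i, S.alpha i

/-- One step of minibatch SAGA with batch `B = (i_1, …, i_m)` (one index per machine). -/
def step {m : ℕ} (gradf : Fin n → EuclideanSpace ℝ (Fin d) → EuclideanSpace ℝ (Fin d))
    (η : ℝ) (S : MbState d n) (B : Fin m → Fin n) : MbState d n where
  x := S.x - η • ((∑ j, gradf (B j) S.x) - (∑ j, S.alpha (B j)) + (m : ℝ) • S.abar)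
  alpha := fun i => if ∃ j, B j = i then gradf i S.x else S.alpha i

/-- Run `k` steps of minibatch SAGA, with batches given by `ω`. -/
def run {m : ℕ} (gradf : Fin n → EuclideanSpace ℝ (Fin d) → EuclideanSpace ℝ (Fin d))
    (η : ℝ) (S0 : MbState d n) : (k : ℕ) → (Fin k → (Fin m → Fin n)) → MbState d n
  | 0, _ => S0
  | (k + 1), ω => step gradf η (run gradf η S0 k (fun t => ω t.castSucc)) (ω (Fin.last k))

end MbState

/-- The probability of a batch `B`, when each `i_j` is drawn independently and uniformly from
`S_j = J⁻¹(j)` (each of size `n/m`): it is `(m/n)^m` if `B j ∈ S_j` for all `j`, and `0`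
otherwise. -/
def mbWeight {n m : ℕ} (J : Fin n → Fin m) (B : Fin m → Fin n) : ℝ :=
  ∏ j, if J (B j) = j then (m : ℝ) / n else 0

end

section Cocoercive

variable {E : Type*} [NormedAddCommGroup E] [InnerProductSpace ℝ E] [CompleteSpace E]
  {f : E → ℝ} {g : E → E}

theorem HasGradientAt.comp_add_smul {g' y u : E} {t : ℝ} (h : HasGradientAt f g' (y + t • u)) :
    HasDerivAt (fun s : ℝ => f (y + s • u)) ⟪g', u⟫ t := by
  have hline : HasDerivAt (fun s : ℝ => y + s • u) u t := by
    simpa using ((hasDerivAt_id t).smul_const u).const_add y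
  exact h.hasFDerivAt.comp_hasDerivAt t hline

theorem ConvexOn.add_inner_le_of_hasGradientAt {g' y : E} (hconv : ConvexOn ℝ Set.univ f)
    (h : HasGradientAt f g' y) (x : E) : f y + ⟪g', x - y⟫ ≤ f x := by
  have hline : ConvexOn ℝ Set.univ (fun t : ℝ => f (y + t • (x - y))) := by
    simpa [Function.comp_def, AffineMap.lineMap_apply, add_comm] using
      hconv.comp_affineMap (AffineMap.lineMap y x : ℝ →ᵃ[ℝ] E)
  have hslope := hline.le_slope_of_hasDerivAt (Set.mem_univ 0) (Set.mem_univ 1) one_pos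
    (HasGradientAt.comp_add_smul (by simpa using h))
  simp [slope_def_field] at hslope
  linarith

theorem le_add_inner_add_of_gradient_lipschitz {L : ℝ} (hg : ∀ z, HasGradientAt f (g z) z)
    (hLip : ∀ a b, ‖g a - g b‖ ≤ L * ‖a - b‖) (x y : E) :
    f x ≤ f y + ⟪g y, x - y⟫ + L / 2 * ‖x - y‖ ^ 2 := by
  set u := x - y
  let ψ : ℝ → ℝ := fun t => f (y + t • u) - t * ⟪g y, u⟫ - L / 2 * t ^ 2 * ‖u‖ ^ 2
  have hψ : ∀ t, HasDerivAt ψ (⟪g (y + t • u) - g y, u⟫ - L * t * ‖u‖ ^ 2) t := fun t => by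
    refine ((((hg (y + t • u)).comp_add_smul).sub ((hasDerivAt_id t).mul_const ⟪g y, u⟫)).sub
      (((hasDerivAt_pow 2 t).const_mul (L / 2)).mul_const (‖u‖ ^ 2))).congr_deriv ?_
    simp only [inner_sub_left]
    ring
  have hψ_nonpos : ∀ t, 0 < t → ⟪g (y + t • u) - g y, u⟫ - L * t * ‖u‖ ^ 2 ≤ 0 := by
    intro t ht
    have hcs := real_inner_le_norm (g (y + t • u) - g y) u
    have hlip := hLip (y + t • u) y
    rw [add_sub_cancel_left, norm_smul, Real.norm_of_nonneg ht.le] at hlip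
    nlinarith [norm_nonneg u]
  have hanti : AntitoneOn ψ (Set.Ici 0) :=
    antitoneOn_of_hasDerivWithinAt_nonpos (convex_Ici 0)
      (fun t _ => (hψ t).continuousAt.continuousWithinAt) (fun t _ => (hψ t).hasDerivWithinAt)
      (fun t ht => hψ_nonpos t (by simpa using ht))
  have := hanti Set.self_mem_Ici (Set.mem_Ici.2 zero_le_one) zero_le_one
  simp [ψ, u] at this
  linarith

theorem ConvexOn.norm_sub_sq_div_le_of_gradient_lipschitz {L : ℝ} (hL : 0 < L)
    (hconv : ConvexOn ℝ Set.univ f) (hg : ∀ z, HasGradientAt f (g z) z)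
    (hLip : ∀ a b, ‖g a - g b‖ ≤ L * ‖a - b‖) (x y : E) :
    ‖g x - g y‖ ^ 2 / (2 * L) ≤ f x - f y - ⟪g y, x - y⟫ := by
  set δ := g x - g y
  -- evaluate both first-order bounds at the gradient step from `x`
  set w := x - L⁻¹ • δ
  have hlow := hconv.add_inner_le_of_hasGradientAt (hg y) w
  have hup := le_add_inner_add_of_gradient_lipschitz hg hLip w x
  have hwx : w - x = -(L⁻¹ • δ) := by simp [w]
  have hwy : w - y = (x - y) - L⁻¹ • δ := by simp only [w]; abel
  rw [hwx, inner_neg_right, inner_smul_right, norm_neg, norm_smul, Real.norm_of_nonneg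
    (inv_nonneg.2 hL.le)] at hup
  rw [hwy, inner_sub_right, inner_smul_right] at hlow
  have hδ : ⟪g x, δ⟫ - ⟪g y, δ⟫ = ‖δ‖ ^ 2 := by
    rw [← inner_sub_left, real_inner_self_eq_norm_sq]
  rw [div_le_iff₀ (by positivity)]
  field_simp at hup hlow
  nlinarith

theorem ConvexOn.norm_sub_sq_le_mul_inner_of_gradient_lipschitz {L : ℝ} (hL : 0 < L)
    (hconv : ConvexOn ℝ Set.univ f) (hg : ∀ z, HasGradientAt f (g z) z)
    (hLip : ∀ a b, ‖g a - g b‖ ≤ L * ‖a - b‖) (x y : E) :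
    ‖g x - g y‖ ^ 2 ≤ L * ⟪g x - g y, x - y⟫ := by
  have hxy := hconv.norm_sub_sq_div_le_of_gradient_lipschitz hL hg hLip x y
  have hyx := hconv.norm_sub_sq_div_le_of_gradient_lipschitz hL hg hLip y x
  rw [norm_sub_rev, ← neg_sub x y, inner_neg_right] at hyx
  rw [div_le_iff₀ (by positivity)] at hxy hyx
  rw [inner_sub_left]
  nlinarith

end Cocoercive

theorem norm_sub_sq_le_two_mul_add_two_mul_s16 {G : Type*} [SeminormedAddCommGroup G] (a b c : G) :
    ‖a - b‖ ^ 2 ≤ 2 * ‖a - c‖ ^ 2 + 2 * ‖b - c‖ ^ 2 := by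
  have := norm_sub_le_norm_sub_add_norm_sub a c b
  rw [norm_sub_rev c b] at this
  nlinarith [norm_nonneg (a - b), sq_nonneg (‖a - c‖ - ‖b - c‖)]

theorem sum_norm_gradient_sub_sq_le {E : Type*} [NormedAddCommGroup E] [InnerProductSpace ℝ E]
    [CompleteSpace E] {ι : Type*} [Fintype ι] {f : ι → E → ℝ} {g : ι → E → E} {L : ℝ} (hL : 0 < L)
    (hconv : ∀ i, ConvexOn ℝ Set.univ (f i)) (hg : ∀ i z, HasGradientAt (f i) (g i z) z)
    (hLip : ∀ i a b, ‖g i a - g i b‖ ≤ L * ‖a - b‖) {xstar : E} (hstar : ∑ i, g i xstar = 0)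
    (x : E) (α : ι → E) :
    ∑ i, ‖g i x - α i‖ ^ 2 ≤
      2 * L * ⟪x - xstar, ∑ i, g i x⟫ + 2 * ∑ i, ‖α i - g i xstar‖ ^ 2 := by
  have hinner : ∑ i, ⟪g i x - g i xstar, x - xstar⟫ = ⟪x - xstar, ∑ i, g i x⟫ := by
    rw [← sum_inner, sum_sub_distrib, hstar, sub_zero, real_inner_comm]
  calc ∑ i, ‖g i x - α i‖ ^ 2
      ≤ ∑ i, (2 * (L * ⟪g i x - g i xstar, x - xstar⟫) + 2 * ‖α i - g i xstar‖ ^ 2) := by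
        gcongr with i
        have := (hconv i).norm_sub_sq_le_mul_inner_of_gradient_lipschitz hL (hg i) (hLip i) x xstar
        linarith [norm_sub_sq_le_two_mul_add_two_mul_s16 (g i x) (α i) (g i xstar)]
    _ = 2 * L * ⟪x - xstar, ∑ i, g i x⟫ + 2 * ∑ i, ‖α i - g i xstar‖ ^ 2 := by
        rw [sum_add_distrib, ← mul_sum, ← mul_sum, ← mul_sum, hinner, mul_assoc]

section ProductWeights

variable {ι κ : Type*} [Fintype ι] [DecidableEq ι] [Fintype κ]

def piWeight (w : ι → κ → ℝ) (B : ι → κ) : ℝ :=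
  ∏ l, w l (B l)

theorem sum_piWeight_mul_prod (w h : ι → κ → ℝ) :
    ∑ B, piWeight w B * ∏ l, h l (B l) = ∏ l, ∑ k, w l k * h l k := by
  simp_rw [piWeight, ← prod_mul_distrib]
  exact (Fintype.prod_sum fun l k => w l k * h l k).symm

variable {w : ι → κ → ℝ}

theorem sum_piWeight (hw : ∀ l, ∑ k, w l k = 1) : ∑ B, piWeight w B = 1 := by
  simpa [hw] using sum_piWeight_mul_prod w 1

theorem sum_piWeight_mul_apply (hw : ∀ l, ∑ k, w l k = 1) (j : ι) (F : κ → ℝ) :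
    ∑ B, piWeight w B * F (B j) = ∑ k, w j k * F k := by
  have := sum_piWeight_mul_prod w (fun l k => if l = j then F k else 1)
  rw [Fintype.prod_eq_single j (fun l hl => by simp [hl, hw])] at this
  simpa [Fintype.prod_ite_eq'] using this

theorem sum_piWeight_mul_mul (hw : ∀ l, ∑ k, w l k = 1) {j j' : ι} (hj : j ≠ j')
    (F G : κ → ℝ) :
    ∑ B, piWeight w B * (F (B j) * G (B j')) = (∑ k, w j k * F k) * ∑ k, w j' k * G k := by
  have := sum_piWeight_mul_prod w (fun l k => if l = j then F k else if l = j' then G k else 1)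
  rw [Fintype.prod_eq_mul j j' hj (fun l hl => by simp [hl.1, hl.2, hw])] at this
  simp only [if_true, if_neg hj, if_neg hj.symm] at this
  rw [← this]
  refine sum_congr rfl fun B _ => ?_
  rw [Fintype.prod_eq_mul j j' hj (fun l hl => by simp [hl.1, hl.2])]
  simp [hj.symm]

theorem sum_piWeight_mul_apply_apply (hw : ∀ l, ∑ k, w l k = 1) {j j' : ι} (hj : j ≠ j')
    (F : κ → κ → ℝ) :
    ∑ B, piWeight w B * F (B j) (B j') = ∑ k, ∑ k', w j k * w j' k' * F k k' := by
  classical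
  have hF : ∀ B : ι → κ, piWeight w B * F (B j) (B j') = ∑ k, ∑ k',
      piWeight w B * ((if B j = k then 1 else 0) * (if B j' = k' then 1 else 0)) * F k k' := by
    intro B
    simp
  simp_rw [hF]
  rw [sum_comm]
  refine sum_congr rfl fun k _ => ?_
  rw [sum_comm]
  refine sum_congr rfl fun k' _ => ?_
  have hind := sum_piWeight_mul_mul hw hj (fun x => if x = k then (1 : ℝ) else 0)
    (fun x => if x = k' then (1 : ℝ) else 0)
  rw [← sum_mul, hind]
  simp

variable {F : Type*} [NormedAddCommGroup F] [InnerProductSpace ℝ F]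

theorem sum_piWeight_mul_inner (hw : ∀ l, ∑ k, w l k = 1) {Z : ι → κ → F}
    (hZ : ∀ j, ∑ k, w j k • Z j k = 0) (j j' : ι) :
    ∑ B, piWeight w B * ⟪Z j (B j), Z j' (B j')⟫ =
      if j = j' then ∑ k, w j k * ‖Z j k‖ ^ 2 else 0 := by
  split_ifs with h
  · subst h
    simp_rw [real_inner_self_eq_norm_sq]
    exact sum_piWeight_mul_apply hw j (fun k => ‖Z j k‖ ^ 2)
  · rw [sum_piWeight_mul_apply_apply hw h (fun k k' => ⟪Z j k, Z j' k'⟫)]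
    have : ⟪∑ k, w j k • Z j k, ∑ k', w j' k' • Z j' k'⟫ = 0 := by rw [hZ j, inner_zero_left]
    simp_rw [sum_inner, inner_sum, real_inner_smul_left, real_inner_smul_right] at this
    simpa only [mul_assoc] using this

theorem sum_piWeight_mul_norm_add_sum_sq (hw : ∀ l, ∑ k, w l k = 1) (a : F) {Z : ι → κ → F}
    (hZ : ∀ j, ∑ k, w j k • Z j k = 0) :
    ∑ B, piWeight w B * ‖a + ∑ j, Z j (B j)‖ ^ 2 =
      ‖a‖ ^ 2 + ∑ j, ∑ k, w j k * ‖Z j k‖ ^ 2 := by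
  have hlin : ∀ j, ∑ B, piWeight w B * ⟪a, Z j (B j)⟫ = 0 := fun j => by
    rw [sum_piWeight_mul_apply hw j (fun k => ⟪a, Z j k⟫)]
    simp_rw [← real_inner_smul_right, ← inner_sum, hZ j, inner_zero_right]
  have hexpand : ∀ B : ι → κ, ‖a + ∑ j, Z j (B j)‖ ^ 2 = ‖a‖ ^ 2 +
      2 * ∑ j, ⟪a, Z j (B j)⟫ + ∑ j, ∑ j', ⟪Z j (B j), Z j' (B j')⟫ := by
    intro B
    rw [norm_add_sq_real, inner_sum, ← real_inner_self_eq_norm_sq (∑ j, _), sum_inner]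
    simp_rw [inner_sum]
  simp_rw [hexpand, mul_add, sum_add_distrib, ← sum_mul, sum_piWeight hw, mul_sum]
  have hlin' : ∑ B, ∑ j, piWeight w B * (2 * ⟪a, Z j (B j)⟫) = 0 := by
    rw [sum_comm]
    refine sum_eq_zero fun j _ => ?_
    simp_rw [mul_left_comm _ (2 : ℝ)]
    rw [← mul_sum, hlin, mul_zero]
  have hquad : ∑ B, ∑ j, ∑ j', piWeight w B * ⟪Z j (B j), Z j' (B j')⟫ =
      ∑ j, ∑ k, w j k * ‖Z j k‖ ^ 2 := by
    rw [sum_comm]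
    refine sum_congr rfl fun j _ => ?_
    rw [sum_comm]
    simp_rw [sum_piWeight_mul_inner hw hZ j, sum_ite_eq, if_pos (mem_univ j)]
  rw [hlin', hquad]
  ring

theorem sum_mul_norm_sub_sum_smul_sq_le {w : κ → ℝ} (hw : ∑ k, w k = 1) (u : κ → F) :
    ∑ k, w k * ‖u k - ∑ k', w k' • u k'‖ ^ 2 ≤ ∑ k, w k * ‖u k‖ ^ 2 := by
  set μ := ∑ k', w k' • u k'
  have hcross : ∑ k, w k * (2 * ⟪u k, μ⟫) = 2 * ‖μ‖ ^ 2 := calc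
    _ = 2 * ⟪∑ k, w k • u k, μ⟫ := by
      simp_rw [sum_inner, real_inner_smul_left, mul_sum, mul_left_comm]
    _ = 2 * ‖μ‖ ^ 2 := by rw [real_inner_self_eq_norm_sq]
  have hconst : ∑ k, w k * ‖μ‖ ^ 2 = ‖μ‖ ^ 2 := by rw [← sum_mul, hw, one_mul]
  simp_rw [norm_sub_sq_real, mul_add, mul_sub, sum_add_distrib, sum_sub_distrib, hcross, hconst]
  linarith [sq_nonneg ‖μ‖]

end ProductWeights

namespace MbState

variable {d n m : ℕ}

theorem step_x_sub_eq
    (gradf : Fin n → EuclideanSpace ℝ (Fin d) → EuclideanSpace ℝ (Fin d)) (η : ℝ)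
    (S : MbState d n) (xstar : EuclideanSpace ℝ (Fin d)) {w : Fin m → Fin n → ℝ}
    (hw : ∀ i, ∑ j, w j i = m / n) (B : Fin m → Fin n) :
    (S.step gradf η B).x - xstar =
      (S.x - xstar - (η * m) • ((1 / n : ℝ) • ∑ i, gradf i S.x)) +
        ∑ j, η • (∑ i, w j i • (gradf i S.x - S.alpha i) - (gradf (B j) S.x - S.alpha (B j))) := by
  have hmean : ∑ j, ∑ i, w j i • (gradf i S.x - S.alpha i) =
      ((m : ℝ) / n) • ((∑ i, gradf i S.x) - ∑ i, S.alpha i) := by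
    rw [sum_comm, ← sum_sub_distrib, smul_sum]
    simp_rw [← sum_smul, hw]
  simp only [step, abar, ← smul_sum, sum_sub_distrib, hmean]
  module

theorem sum_mbWeight_mul_norm_step_sub_sq_le (hn : 0 < n) (hm : 0 < m) (hmn : m ∣ n)
    {J : Fin n → Fin m} (hpart : ∀ j, (univ.filter (fun i => J i = j)).card = n / m)
    (gradf : Fin n → EuclideanSpace ℝ (Fin d) → EuclideanSpace ℝ (Fin d)) (η : ℝ)
    (S : MbState d n) (xstar : EuclideanSpace ℝ (Fin d)) :
    ∑ B, mbWeight J B * ‖(S.step gradf η B).x - xstar‖ ^ 2 ≤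
      ‖S.x - xstar - (η * m) • ((1 / n : ℝ) • ∑ i, gradf i S.x)‖ ^ 2 +
        η ^ 2 * (m / n) * ∑ i, ‖gradf i S.x - S.alpha i‖ ^ 2 := by
  set w : Fin m → Fin n → ℝ := fun j i => if J i = j then (m : ℝ) / n else 0
  have hw_machine : ∀ j, ∑ i, w j i = 1 := fun j => by
    rw [← sum_filter, sum_const, hpart j, nsmul_eq_mul, Nat.cast_div hmn (by positivity)]
    field_simp
  have hw_index : ∀ i, ∑ j, w j i = m / n := fun i => by simp [w]
  set u := fun i => gradf i S.x - S.alpha i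
  set Z : Fin m → Fin n → EuclideanSpace ℝ (Fin d) :=
    fun j i => η • (∑ i', w j i' • u i' - u i)
  have hZ : ∀ j, ∑ i, w j i • Z j i = 0 := fun j => by
    simp_rw [Z, smul_comm _ η, ← smul_sum, smul_sub, sum_sub_distrib, ← sum_smul, hw_machine,
      one_smul, sub_self, smul_zero]
  have hvar : ∑ j, ∑ i, w j i * ‖Z j i‖ ^ 2 ≤ η ^ 2 * (m / n) * ∑ i, ‖u i‖ ^ 2 := calc
    _ = η ^ 2 * ∑ j, ∑ i, w j i * ‖u i - ∑ i', w j i' • u i'‖ ^ 2 := by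
      rw [mul_sum]
      refine sum_congr rfl fun j _ => ?_
      rw [mul_sum]
      refine sum_congr rfl fun i _ => ?_
      rw [norm_smul, mul_pow, Real.norm_eq_abs, sq_abs, norm_sub_rev]
      ring
    _ ≤ η ^ 2 * ∑ j, ∑ i, w j i * ‖u i‖ ^ 2 := by
      gcongr η ^ 2 * ?_
      exact sum_le_sum fun j _ => sum_mul_norm_sub_sum_smul_sq_le (hw_machine j) u
    _ = η ^ 2 * (m / n) * ∑ i, ‖u i‖ ^ 2 := by
      rw [sum_comm, mul_assoc, mul_sum]
      simp_rw [← sum_mul, hw_index, ← mul_sum]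
  simp_rw [step_x_sub_eq gradf η S xstar hw_index]
  change ∑ B, piWeight w B * _ ≤ _
  rw [sum_piWeight_mul_norm_add_sum_sq hw_machine _ hZ]
  linarith

end MbState

theorem minibatch_phi1_decrease_general
    {d n m : ℕ} (hn : 0 < n) (hm : 0 < m) (hmn : m ∣ n)
    (L : ℝ) (hL : 0 < L)
    (f : Fin n → EuclideanSpace ℝ (Fin d) → ℝ)
    (gradf : Fin n → EuclideanSpace ℝ (Fin d) → EuclideanSpace ℝ (Fin d))
    (hgrad : ∀ i x, HasGradientAt (f i) (gradf i x) x)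
    (hconv : ∀ i, ConvexOn ℝ Set.univ (f i))
    (hsmooth : ∀ i (x y : EuclideanSpace ℝ (Fin d)), ‖gradf i x - gradf i y‖ ≤ L * ‖x - y‖)
    (xstar : EuclideanSpace ℝ (Fin d))
    (hstarzero : (∑ i, gradf i xstar) = 0)
    (J : Fin n → Fin m)
    (hpart : ∀ j, (Finset.univ.filter (fun i => J i = j)).card = n / m)
    (η : ℝ)
    (S : MbState d n)
    :
    (∑ B : Fin m → Fin n, mbWeight J B * ‖(MbState.step gradf η S B).x - xstar‖ ^ 2)
        - ‖S.x - xstar‖ ^ 2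
      ≤ -2 * (m : ℝ) * η * ⟪S.x - xstar, ((1 : ℝ) / n) • ∑ i, gradf i S.x⟫
        + η ^ 2 * (m : ℝ) ^ 2 * ‖((1 : ℝ) / n) • ∑ i, gradf i S.x‖ ^ 2
        + 2 * η ^ 2 * (m : ℝ) * L * ⟪S.x - xstar, ((1 : ℝ) / n) • ∑ i, gradf i S.x⟫
        + (2 * η ^ 2 * (m : ℝ) / n) * (∑ i, ‖S.alpha i - gradf i xstar‖ ^ 2) := by
  have hstep := S.sum_mbWeight_mul_norm_step_sub_sq_le hn hm hmn hpart gradf η xstar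
  have hvar := sum_norm_gradient_sub_sq_le hL hconv hgrad hsmooth hstarzero S.x S.alpha
  set y := S.x - xstar
  set gbar := ((1 : ℝ) / n) • ∑ i, gradf i S.x
  have hn' : (n : ℝ) ≠ 0 := by positivity
  have hinner : ⟪y, ∑ i, gradf i S.x⟫ = n * ⟪y, gbar⟫ := by
    rw [real_inner_smul_right]
    field_simp
  have hsq : ‖y - (η * m) • gbar‖ ^ 2 =
      ‖y‖ ^ 2 - 2 * m * η * ⟪y, gbar⟫ + η ^ 2 * m ^ 2 * ‖gbar‖ ^ 2 := by
    rw [norm_sub_sq_real, real_inner_smul_right, norm_smul, Real.norm_eq_abs, mul_pow, sq_abs]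
    ring
  set D := ∑ i, ‖S.alpha i - gradf i xstar‖ ^ 2
  have hscale : η ^ 2 * (m / n) * (2 * L * (n * ⟪y, gbar⟫) + 2 * D) =
      2 * η ^ 2 * m * L * ⟪y, gbar⟫ + 2 * η ^ 2 * m / n * D := by
    field_simp
  rw [hinner] at hvar
  have := mul_le_mul_of_nonneg_left hvar (by positivity : 0 ≤ η ^ 2 * (m / n))
  linarith

theorem minibatch_phi1_decrease
    {d n m : ℕ} (hd : 0 < d) (hn : 0 < n) (hm : 0 < m) (hmn : m ∣ n)
    (L Lf μ : ℝ) (hL : 0 < L) (hLf : 0 < Lf) (hμ : 0 < μ)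
    (f : Fin n → EuclideanSpace ℝ (Fin d) → ℝ)
    (gradf : Fin n → EuclideanSpace ℝ (Fin d) → EuclideanSpace ℝ (Fin d))
    (hgrad : ∀ i x, HasGradientAt (f i) (gradf i x) x)
    (hconv : ∀ i, ConvexOn ℝ Set.univ (f i))
    (hsmooth : ∀ i (x y : EuclideanSpace ℝ (Fin d)), ‖gradf i x - gradf i y‖ ≤ L * ‖x - y‖)
    (hFsmooth : ∀ x y : EuclideanSpace ℝ (Fin d),
      ‖((1 : ℝ) / n) • (∑ i, gradf i x) - ((1 : ℝ) / n) • (∑ i, gradf i y)‖ ≤ Lf * ‖x - y‖)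
    (hFstrong : ∀ x y : EuclideanSpace ℝ (Fin d),
      μ * ‖x - y‖ ^ 2 ≤
        ⟪((1 : ℝ) / n) • (∑ i, gradf i x) - ((1 : ℝ) / n) • (∑ i, gradf i y), x - y⟫)
    (xstar : EuclideanSpace ℝ (Fin d))
    (hmin : ∀ x : EuclideanSpace ℝ (Fin d),
      (((1 : ℝ) / n) * ∑ i, f i xstar) ≤ ((1 : ℝ) / n) * ∑ i, f i x)
    (hstarzero : (∑ i, gradf i xstar) = 0)
    (J : Fin n → Fin m)
    (hpart : ∀ j, (Finset.univ.filter (fun i => J i = j)).card = n / m)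
    (η : ℝ) (hη : 0 < η)
    (S : MbState d n)
    :
    (∑ B : Fin m → Fin n, mbWeight J B * ‖(MbState.step gradf η S B).x - xstar‖ ^ 2)
        - ‖S.x - xstar‖ ^ 2
      ≤ -2 * (m : ℝ) * η * ⟪S.x - xstar, ((1 : ℝ) / n) • ∑ i, gradf i S.x⟫
        + η ^ 2 * (m : ℝ) ^ 2 * ‖((1 : ℝ) / n) • ∑ i, gradf i S.x‖ ^ 2
        + 2 * η ^ 2 * (m : ℝ) * L * ⟪S.x - xstar, ((1 : ℝ) / n) • ∑ i, gradf i S.x⟫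
        + (2 * η ^ 2 * (m : ℝ) / n) * (∑ i, ‖S.alpha i - gradf i xstar‖ ^ 2) :=
  minibatch_phi1_decrease_general hn hm hmn L hL f gradf hgrad hconv hsmooth xstar hstarzero J hpart
    η S
end
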